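/- For every pair of integers L₁ < L₂ with L₁ ≥ 1, there exists a graph G with χ(G) = L₁ and χ^FAT(G) = L₂; in particular the difference χ^FAT(G) − χ(G) is unbounded over all graphs. -/

import Mathlib

open SimpleGraph
open scoped Classical

/-- A FAT `k`-coloring of a graph `G`: a partition of the vertex set into `k`
nonempty color classes `P 0, ..., P (k-1)` together with parameters
`α, β ∈ [0,1]` such that every vertex `v` has exactly `α · deg v` neighbors in
each class not containing `v` and exactly `β · deg v` neighbors in its own class. -/
def IsFATColoring {V : Type*} (G : SimpleGraph V) (k : ℕ)
    (P : Fin k → Set V) (α β : ℝ) : Prop :=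
  (∀ i, (P i).Nonempty) ∧
  (∀ v : V, ∃! i, v ∈ P i) ∧
  0 ≤ α ∧ α ≤ 1 ∧ 0 ≤ β ∧ β ≤ 1 ∧
  ∀ (v : V) (i : Fin k),
    ((G.neighborSet v ∩ P i).ncard : ℝ) =
      if v ∈ P i then β * (G.neighborSet v).ncard
      else α * (G.neighborSet v).ncard

/-- The FAT chromatic number of `G`: the largest `k` for which `G` admits a
FAT `k`-coloring. -/
noncomputable def fatChromaticNumber {V : Type*} (G : SimpleGraph V) : ℕ :=
  sSup {k : ℕ | ∃ P : Fin k → Set V, ∃ α β : ℝ, IsFATColoring G k P α β}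

/-- complete graph on `Fin n` plus `t` isolated vertices -/
def fatG (n t : ℕ) : SimpleGraph (Fin n ⊕ Fin t) where
  Adj u v := ∃ a b : Fin n, a ≠ b ∧ u = Sum.inl a ∧ v = Sum.inl b
  symm := by constructor; rintro u v ⟨a, b, h, rfl, rfl⟩; exact ⟨b, a, h.symm, rfl, rfl⟩
  loopless := by constructor; rintro u ⟨a, b, h, rfl, h2⟩; exact h (Sum.inl.inj h2)

lemma fatG_nbhd_inl (n t : ℕ) (a : Fin n) :
    (fatG n t).neighborSet (Sum.inl a) = Sum.inl '' {a}ᶜ := by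
  ext w
  simp only [mem_neighborSet, fatG, Set.mem_image, Set.mem_compl_iff, Set.mem_singleton_iff]
  constructor
  · rintro ⟨a', b, hab, ha, rfl⟩
    exact ⟨b, fun h => hab ((Sum.inl.inj ha).symm.trans h.symm), rfl⟩
  · rintro ⟨b, hb, rfl⟩
    exact ⟨a, b, fun h => hb (by rw [← h]), rfl, rfl⟩

lemma fatG_nbhd_inr (n t : ℕ) (b : Fin t) :
    (fatG n t).neighborSet (Sum.inr b) = ∅ := by
  ext w
  simp only [mem_neighborSet, fatG, Set.mem_empty_iff_false, iff_false]
  rintro ⟨a, b', hab, h, rfl⟩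
  cases h

lemma ncard_compl_singleton (n : ℕ) (a : Fin n) : ({a}ᶜ : Set (Fin n)).ncard = n - 1 := by
  rw [Set.ncard_eq_toFinset_card']
  simp [Finset.card_compl]

lemma fatG_nbhd_inl_ncard (n t : ℕ) (a : Fin n) :
    ((fatG n t).neighborSet (Sum.inl a)).ncard = n - 1 := by
  rw [fatG_nbhd_inl, Set.ncard_image_of_injective _ Sum.inl_injective, ncard_compl_singleton]

lemma fatG_chrom (n t : ℕ) (hn : 1 ≤ n) : (fatG n t).chromaticNumber = (n : ℕ∞) := by
  apply le_antisymm
  · refine Colorable.chromaticNumber_le (n := n) ⟨⟨Sum.elim id (fun _ => ⟨0, hn⟩), ?_⟩⟩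
    rintro u v ⟨a, b, hab, rfl, rfl⟩
    simpa using hab
  · have hcl : (fatG n t).IsClique (↑(Finset.univ.image (Sum.inl : Fin n → Fin n ⊕ Fin t))) := by
      intro u hu v hv huv
      simp only [Finset.coe_image, Finset.coe_univ, Set.image_univ, Set.mem_range] at hu hv
      obtain ⟨a, rfl⟩ := hu
      obtain ⟨b, rfl⟩ := hv
      exact ⟨a, b, fun h => huv (by rw [h]), rfl, rfl⟩
    have := hcl.card_le_chromaticNumber
    rwa [Finset.card_image_of_injective _ Sum.inl_injective, Finset.card_univ,
      Fintype.card_fin] at this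

lemma fatG_mem (n t : ℕ) (hn : 1 ≤ n) :
    ∃ P : Fin (t+1) → Set (Fin n ⊕ Fin t), ∃ α β : ℝ,
      IsFATColoring (fatG n t) (t+1) P α β := by
  refine ⟨fun i => Fin.cases (Set.range Sum.inl) (fun b => {Sum.inr b}) i, 0, 1,
    ?_, ?_, le_refl 0, zero_le_one, zero_le_one, le_refl 1, ?_⟩
  · intro i
    induction i using Fin.cases with
    | zero => exact ⟨Sum.inl ⟨0, hn⟩, by simp⟩
    | succ b => exact ⟨Sum.inr b, by simp⟩
  · rintro (a | b)
    · refine ⟨0, by simp, ?_⟩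
      intro j hj
      induction j using Fin.cases with
      | zero => rfl
      | succ c => simp at hj
    · refine ⟨Fin.succ b, by simp, ?_⟩
      intro j hj
      induction j using Fin.cases with
      | zero => simp at hj
      | succ c => simp at hj; rw [hj]
  · rintro (a | b) i
    · induction i using Fin.cases with
      | zero =>
        rw [fatG_nbhd_inl]
        dsimp only [Fin.cases_zero]
        change _ = @ite ℝ (Sum.inl a ∈ Set.range Sum.inl) (Classical.propDecidable _) _ _
        rw [if_pos ⟨a, rfl⟩, one_mul,
          Set.inter_eq_self_of_subset_left (Set.image_subset_range _ _),
          ← fatG_nbhd_inl n t a]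
      | succ c =>
        dsimp only [Fin.cases_succ]
        change _ = @ite ℝ (Sum.inl a ∈ ({Sum.inr c} : Set (Fin n ⊕ Fin t))) (Classical.propDecidable _) _ _
        rw [if_neg (by simp), zero_mul]
        have : (fatG n t).neighborSet (Sum.inl a) ∩ {Sum.inr c} = ∅ := by
          rw [fatG_nbhd_inl]
          ext w
          simp only [Set.mem_inter_iff, Set.mem_image, Set.mem_singleton_iff,
            Set.mem_empty_iff_false, iff_false, not_and]
          rintro ⟨x, _, rfl⟩ h
          cases h
        rw [this]
        simp
    · rw [fatG_nbhd_inr]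
      simp

lemma fatG_ub (n t : ℕ) (hn : 1 ≤ n) (hnt : n ≤ t + 1) (k : ℕ)
    (P : Fin k → Set (Fin n ⊕ Fin t)) (α β : ℝ)
    (h : IsFATColoring (fatG n t) k P α β) : k ≤ t + 1 := by
  obtain ⟨hne, huniq, -, -, -, -, hcount⟩ := h
  by_cases hall : ∀ i : Fin k, ∃ a : Fin n, Sum.inl a ∈ P i
  · choose g hg using hall
    have hinj : Function.Injective g := by
      intro i j hij
      obtain ⟨c, -, hu⟩ := huniq (Sum.inl (g i))
      exact (hu i (hg i)).trans (hu j (hij ▸ hg j)).symm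
    calc k = Fintype.card (Fin k) := (Fintype.card_fin k).symm
      _ ≤ Fintype.card (Fin n) := Fintype.card_le_of_injective g hinj
      _ = n := Fintype.card_fin n
      _ ≤ t + 1 := hnt
  · push_neg at hall
    obtain ⟨i₀, hi₀⟩ := hall
    -- at most one class contains a left (clique) vertex
    have honeK : ∀ i j (a b : Fin n), Sum.inl a ∈ P i → Sum.inl b ∈ P j → i = j := by
      intro i j a b ha hb
      by_contra hij
      have hab : a ≠ b := by
        rintro rfl
        obtain ⟨c, -, hu⟩ := huniq (Sum.inl a)
        exact hij ((hu i ha).trans (hu j hb).symm)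
      have hvb : Sum.inl b ∉ P i := by
        intro hmem
        obtain ⟨c, -, hu⟩ := huniq (Sum.inl b)
        exact hij ((hu i hmem).trans (hu j hb).symm)
      have h1 := hcount (Sum.inl b) i
      rw [if_neg hvb] at h1
      have h0 := hcount (Sum.inl b) i₀
      rw [if_neg (hi₀ b)] at h0
      have hemp : (fatG n t).neighborSet (Sum.inl b) ∩ P i₀ = ∅ := by
        rw [fatG_nbhd_inl]
        ext w
        simp only [Set.mem_inter_iff, Set.mem_image, Set.mem_empty_iff_false, iff_false, not_and]
        rintro ⟨x, -, rfl⟩ hw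
        exact hi₀ x hw
      rw [hemp, Set.ncard_empty, Nat.cast_zero] at h0
      rw [← h0] at h1
      have hzero : ((fatG n t).neighborSet (Sum.inl b) ∩ P i).ncard = 0 := by
        exact_mod_cast h1
      rw [Set.ncard_eq_zero (Set.toFinite _)] at hzero
      have hmem : Sum.inl a ∈ (fatG n t).neighborSet (Sum.inl b) ∩ P i :=
        ⟨⟨b, a, hab.symm, rfl, rfl⟩, ha⟩
      rw [hzero] at hmem
      exact hmem
    classical
    have hinj : Function.Injective (fun i : Fin k =>
        if h : ∃ b : Fin t, Sum.inr b ∈ P i then some (Classical.choose h)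
        else (none : Option (Fin t))) := by
      intro i j hij
      simp only [] at hij
      by_cases hi : ∃ b : Fin t, Sum.inr b ∈ P i <;>
        by_cases hj : ∃ b : Fin t, Sum.inr b ∈ P j
      · rw [dif_pos hi, dif_pos hj] at hij
        have := Option.some.inj hij
        obtain ⟨c, -, hu⟩ := huniq (Sum.inr (Classical.choose hi))
        exact (hu i (Classical.choose_spec hi)).trans
          (hu j (this ▸ Classical.choose_spec hj)).symm
      · rw [dif_pos hi, dif_neg hj] at hij; exact absurd hij (by simp)
      · rw [dif_neg hi, dif_pos hj] at hij; exact absurd hij (by simp)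
      · -- both classes contain only left vertices
        push_neg at hi hj
        obtain ⟨u, hu⟩ := hne i
        obtain ⟨w, hw⟩ := hne j
        rcases u with a | b
        · rcases w with a' | b'
          · exact honeK i j a a' hu hw
          · exact absurd hw (hj b')
        · exact absurd hu (hi b)
    calc k = Fintype.card (Fin k) := (Fintype.card_fin k).symm
      _ ≤ Fintype.card (Option (Fin t)) := Fintype.card_le_of_injective _ hinj
      _ = t + 1 := by simp

theorem fat_gap_unbounded (L₁ L₂ : ℕ) (h1 : 1 ≤ L₁) (h2 : L₁ < L₂) :
    ∃ (V : Type) (_ : Fintype V) (G : SimpleGraph V),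
      G.chromaticNumber = (L₁ : ℕ∞) ∧ fatChromaticNumber G = L₂ := by
  set t := L₂ - 1 with ht
  have htL : t + 1 = L₂ := Nat.succ_pred_eq_of_pos (lt_of_le_of_lt (Nat.zero_le _) h2)
  refine ⟨Fin L₁ ⊕ Fin t, inferInstance, fatG L₁ t, fatG_chrom L₁ t h1, ?_⟩
  have hnt : L₁ ≤ t + 1 := by omega
  have hmem : (t + 1) ∈ {k : ℕ | ∃ P : Fin k → Set (Fin L₁ ⊕ Fin t), ∃ α β : ℝ,
      IsFATColoring (fatG L₁ t) k P α β} := fatG_mem L₁ t h1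
  have hub : ∀ k ∈ {k : ℕ | ∃ P : Fin k → Set (Fin L₁ ⊕ Fin t), ∃ α β : ℝ,
      IsFATColoring (fatG L₁ t) k P α β}, k ≤ t + 1 := by
    rintro k ⟨P, α, β, hcol⟩
    exact fatG_ub L₁ t h1 hnt k P α β hcol
  rw [← htL]
  exact le_antisymm (csSup_le ⟨t + 1, hmem⟩ hub) (le_csSup ⟨t + 1, hub⟩ hmem)
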